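/- arXiv:1406.5915 — 2 statements merged into one kernel-verified Lean document; each statement's English description precedes it below -/
import Mathlib

section
/- (Carter's observation) Let T be a stress-energy tensor on (N+1)-dimensional Minkowski space satisfying the dominant energy condition, and suppose T ≠ 0 (as a matrix). Then for every future-directed timelike vector v, the image u(v) = -ηTv is nonzero. Equivalently, under the dominant energy condition, a vector that is sent to zero by the associated endomorphism of a nontrivial T must be lightlike (or zero). -/
open Matrix

/-- The Minkowski metric `diag(-1,1,…,1)` on `ℝ^{N+1}`. -/
noncomputable def eta (N : ℕ) : Matrix (Fin (N+1)) (Fin (N+1)) ℝ :=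
  Matrix.diagonal (fun i => if i = 0 then (-1 : ℝ) else 1)

/-- The Minkowski bilinear form `η(x,y) = -x₀y₀ + ∑ᵢ xᵢyᵢ`. -/
noncomputable def mdot {N : ℕ} (x y : Fin (N+1) → ℝ) : ℝ :=
  x ⬝ᵥ (eta N).mulVec y

/-- Future-directed timelike: `η(v,v) < 0` and `v₀ > 0`. -/
def FDTimelike {N : ℕ} (v : Fin (N+1) → ℝ) : Prop :=
  mdot v v < 0 ∧ 0 < v 0

/-- Future-directed lightlike: `v ≠ 0`, `η(v,v) = 0` and `v₀ > 0`. -/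
def FDLightlike {N : ℕ} (v : Fin (N+1) → ℝ) : Prop :=
  v ≠ 0 ∧ mdot v v = 0 ∧ 0 < v 0

/-- Future-directed causal: future-directed timelike or lightlike. -/
def FDCausal {N : ℕ} (v : Fin (N+1) → ℝ) : Prop :=
  FDTimelike v ∨ FDLightlike v

/-- The bilinear form associated to a matrix: `T(v,w) = vᵀ T w`. -/
noncomputable def Tbil {N : ℕ} (T : Matrix (Fin (N+1)) (Fin (N+1)) ℝ)
    (v w : Fin (N+1) → ℝ) : ℝ :=
  v ⬝ᵥ T.mulVec w

/-- The endomorphism associated to a stress-energy tensor: `u(v) = -ηTv`. -/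
noncomputable def endo {N : ℕ} (T : Matrix (Fin (N+1)) (Fin (N+1)) ℝ)
    (v : Fin (N+1) → ℝ) : Fin (N+1) → ℝ :=
  -((eta N).mulVec (T.mulVec v))

/-- The dominant energy condition: every future-directed causal vector is
sent by the associated endomorphism to a future-directed causal vector or zero. -/
def DEC {N : ℕ} (T : Matrix (Fin (N+1)) (Fin (N+1)) ℝ) : Prop :=
  ∀ v : Fin (N+1) → ℝ, FDCausal v → FDCausal (endo T v) ∨ endo T v = 0

/-! The future timelike cone is open, so a timelike `v` with `u(v) = 0` stays timelike when
perturbed to `v ± t x`. The dominant energy condition then makes both `u(v + t x) = t u(x)` and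
`u(v - t x) = -t u(x)` future-directed causal or zero; their time components have opposite signs,
so `u(x) = 0`. Hence `u = -ηT` vanishes identically, and `T = 0` because `η² = 1`. -/

open Filter Topology

theorem eta_mul_eta (N : ℕ) : eta N * eta N = 1 := by
  rw [eta, diagonal_mul_diagonal, ← diagonal_one]
  congr 1
  ext i
  split_ifs <;> norm_num

theorem endo_eq_mulVec {N : ℕ} (T : Matrix (Fin (N+1)) (Fin (N+1)) ℝ) (v : Fin (N+1) → ℝ) :
    endo T v = (-(eta N * T)) *ᵥ v := by
  rw [endo, neg_mulVec, mulVec_mulVec]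

theorem endo_add_smul_of_endo_eq_zero {N : ℕ} {T : Matrix (Fin (N+1)) (Fin (N+1)) ℝ}
    {v : Fin (N+1) → ℝ} (h0 : endo T v = 0) (t : ℝ) (x : Fin (N+1) → ℝ) :
    endo T (v + t • x) = t • endo T x := by
  rw [endo_eq_mulVec, mulVec_add, mulVec_smul, ← endo_eq_mulVec, h0, zero_add, endo_eq_mulVec]

theorem eq_zero_of_forall_endo_eq_zero {N : ℕ} {T : Matrix (Fin (N+1)) (Fin (N+1)) ℝ}
    (h : ∀ x, endo T x = 0) : T = 0 := by
  have hηT : eta N * T = 0 := by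
    rw [← neg_eq_zero]
    exact ext_of_mulVec_single fun i => by rw [← endo_eq_mulVec, h, zero_mulVec]
  rw [← Matrix.one_mul T, ← eta_mul_eta N, Matrix.mul_assoc, hηT, Matrix.mul_zero]

theorem FDCausal.time_pos {N : ℕ} {w : Fin (N+1) → ℝ} (h : FDCausal w) : 0 < w 0 := by
  rcases h with ⟨_, h⟩ | ⟨_, _, h⟩ <;> exact h

theorem isOpen_setOf_FDTimelike (N : ℕ) : IsOpen {v : Fin (N+1) → ℝ | FDTimelike v} := by
  have hmdot : Continuous fun v : Fin (N+1) → ℝ => mdot v v := by unfold mdot; fun_prop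
  exact (isOpen_lt hmdot continuous_const).inter (isOpen_lt continuous_const (continuous_apply 0))

theorem FDTimelike.eventually_add_smul {N : ℕ} {v : Fin (N+1) → ℝ} (hv : FDTimelike v)
    (x : Fin (N+1) → ℝ) : ∀ᶠ t in 𝓝 (0 : ℝ), FDTimelike (v + t • x) := by
  have hcont : Continuous fun t : ℝ => v + t • x := by fun_prop
  have hlim : Tendsto (fun t : ℝ => v + t • x) (𝓝 0) (𝓝 v) := by
    simpa using hcont.tendsto 0
  exact hlim.eventually ((isOpen_setOf_FDTimelike N).mem_nhds hv)

theorem DEC.forall_endo_eq_zero {N : ℕ} {T : Matrix (Fin (N+1)) (Fin (N+1)) ℝ} (hdec : DEC T)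
    {v : Fin (N+1) → ℝ} (hv : FDTimelike v) (h0 : endo T v = 0) (x : Fin (N+1) → ℝ) :
    endo T x = 0 := by
  have hev := hv.eventually_add_smul x
  have hev_neg : ∀ᶠ t in 𝓝 (0 : ℝ), FDTimelike (v + (-t) • x) :=
    (continuous_neg.tendsto' 0 0 neg_zero).eventually hev
  obtain ⟨t, ⟨hplus, hminus⟩, ht⟩ :=
    ((hev.and hev_neg).filter_mono nhdsWithin_le_nhds |>.and self_mem_nhdsWithin).exists
      (f := 𝓝[≠] (0 : ℝ))
  have hdec_plus := hdec _ (Or.inl hplus)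
  have hdec_minus := hdec _ (Or.inl hminus)
  rw [endo_add_smul_of_endo_eq_zero h0] at hdec_plus hdec_minus
  rcases hdec_plus with hcausal_plus | hzero_plus
  · rcases hdec_minus with hcausal_minus | hzero_minus
    · have := add_pos hcausal_plus.time_pos hcausal_minus.time_pos
      simp only [Pi.smul_apply, smul_eq_mul, neg_mul] at this
      linarith
    · exact (smul_eq_zero.mp hzero_minus).resolve_left (neg_ne_zero.mpr ht)
  · exact (smul_eq_zero.mp hzero_plus).resolve_left ht

theorem carter_observation_general {N : ℕ}
    (T : Matrix (Fin (N+1)) (Fin (N+1)) ℝ)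
    (hdec : DEC T) (hT : T ≠ 0) :
    ∀ v : Fin (N+1) → ℝ, FDTimelike v → endo T v ≠ 0 :=
  fun _ hv h0 => hT (eq_zero_of_forall_endo_eq_zero (hdec.forall_endo_eq_zero hv h0))

/-- Carter's observation: under the dominant energy condition, if `T` is not
zero then the associated endomorphism sends every future-directed timelike
vector to a nonzero vector. -/
theorem carter_observation {N : ℕ} (hN : 1 ≤ N)
    (T : Matrix (Fin (N+1)) (Fin (N+1)) ℝ) (hsymm : T.IsSymm)
    (hdec : DEC T) (hT : T ≠ 0) :
    ∀ v : Fin (N+1) → ℝ, FDTimelike v → endo T v ≠ 0 :=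
  carter_observation_general T hdec hT
end

section
/- Let T be a stress-energy tensor on (N+1)-dimensional Minkowski space satisfying the dominant energy condition. Let V be a future-directed timelike vector normalized so that η(V,V) = -1, and let A be a vector with η(V,A) = 0. Then |T(A,A)| ≤ T(V,V) · η(A,A). -/
open Matrix

/-! With `a² = η(A,A)`, the vectors `a • V ± A` are future-directed null. Under DEC, `T` is
nonnegative on pairs of future-directed causal vectors, because `T(v,w) = -η(u(w),v)` and the
reverse Cauchy–Schwarz inequality makes `η` nonpositive on such pairs. Expanding
`T(w₊,w₊) + T(w₋,w₋) ≥ 0` and `T(w₊,w₋) + T(w₋,w₊) ≥ 0` for `w± = a • V ± A` gives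
`±T(A,A) ≤ a² T(V,V)`. -/

lemma dotProduct_sq_le {n : Type*} [Fintype n] (x y : n → ℝ) :
    (x ⬝ᵥ y) ^ 2 ≤ (x ⬝ᵥ x) * (y ⬝ᵥ y) := by
  simpa [dotProduct, sq] using Finset.sum_mul_sq_le_sq_mul_sq Finset.univ x y

lemma dotProduct_self_nonneg {n : Type*} [Fintype n] (x : n → ℝ) : 0 ≤ x ⬝ᵥ x :=
  Finset.sum_nonneg fun _ _ => mul_self_nonneg _

section Minkowski

variable {N : ℕ}

lemma mdot_eq_dotProduct_tail (x y : Fin (N+1) → ℝ) :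
    mdot x y = -(x 0 * y 0) + Fin.tail x ⬝ᵥ Fin.tail y := by
  simp [mdot, eta, dotProduct, mulVec_diagonal, Fin.sum_univ_succ, Fin.tail]

lemma mdot_eq_Tbil (x y : Fin (N+1) → ℝ) : mdot x y = Tbil (eta N) x y := rfl

lemma mdot_comm (x y : Fin (N+1) → ℝ) : mdot x y = mdot y x := by
  rw [mdot_eq_dotProduct_tail, mdot_eq_dotProduct_tail, dotProduct_comm, mul_comm]

lemma Tbil_smul_add_smul_left (M : Matrix (Fin (N+1)) (Fin (N+1)) ℝ) (a b : ℝ)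
    (x y z : Fin (N+1) → ℝ) : Tbil M (a • x + b • y) z = a * Tbil M x z + b * Tbil M y z := by
  simp only [Tbil, add_dotProduct, smul_dotProduct, smul_eq_mul]

lemma Tbil_smul_add_smul_right (M : Matrix (Fin (N+1)) (Fin (N+1)) ℝ) (a b : ℝ)
    (x y z : Fin (N+1) → ℝ) : Tbil M z (a • x + b • y) = a * Tbil M z x + b * Tbil M z y := by
  simp only [Tbil, mulVec_add, mulVec_smul, dotProduct_add, dotProduct_smul, smul_eq_mul]

lemma Tbil_smul_add_smul (M : Matrix (Fin (N+1)) (Fin (N+1)) ℝ) (a b c d : ℝ)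
    (x y : Fin (N+1) → ℝ) :
    Tbil M (a • x + b • y) (c • x + d • y) =
      a * c * Tbil M x x + a * d * Tbil M x y + b * c * Tbil M y x + b * d * Tbil M y y := by
  simp only [Tbil_smul_add_smul_left, Tbil_smul_add_smul_right]
  ring

lemma mdot_endo (T : Matrix (Fin (N+1)) (Fin (N+1)) ℝ) (v w : Fin (N+1) → ℝ) :
    mdot (endo T v) w = -Tbil T w v := by
  simp only [mdot, endo, Tbil, eta, dotProduct, mulVec_diagonal, Pi.neg_apply,
    ← Finset.sum_neg_distrib]
  refine Finset.sum_congr rfl fun i _ => ?_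
  split_ifs <;> ring

lemma fdCausal_iff {v : Fin (N+1) → ℝ} : FDCausal v ↔ mdot v v ≤ 0 ∧ 0 < v 0 := by
  refine ⟨?_, fun ⟨hvv, hv0⟩ => ?_⟩
  · rintro (⟨hvv, hv0⟩ | ⟨-, hvv, hv0⟩) <;> exact ⟨by linarith, hv0⟩
  · rcases hvv.lt_or_eq with hvv | hvv
    · exact Or.inl ⟨hvv, hv0⟩
    · exact Or.inr ⟨fun h => by simp [h] at hv0, hvv, hv0⟩

lemma mdot_nonpos_of_fdCausal {u w : Fin (N+1) → ℝ} (hu : FDCausal u) (hw : FDCausal w) :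
    mdot u w ≤ 0 := by
  rw [fdCausal_iff, mdot_eq_dotProduct_tail] at hu hw
  have := dotProduct_sq_le (Fin.tail u) (Fin.tail w)
  rw [mdot_eq_dotProduct_tail]
  nlinarith [mul_pos hu.2 hw.2, dotProduct_self_nonneg (Fin.tail u)]

lemma apply_zero_pos_of_mdot_neg {V w : Fin (N+1) → ℝ} (hV : FDTimelike V)
    (hw : mdot w w ≤ 0) (hwV : mdot w V < 0) : 0 < w 0 := by
  obtain ⟨hVV, hV0⟩ := hV
  rw [mdot_eq_dotProduct_tail] at hVV hw hwV
  have hw' : Fin.tail w ⬝ᵥ Fin.tail w ≤ w 0 * w 0 := by linarith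
  have hV' : Fin.tail V ⬝ᵥ Fin.tail V ≤ V 0 * V 0 := by linarith
  have hcs := dotProduct_sq_le (Fin.tail w) (Fin.tail V)
  have := mul_le_mul hw' hV' (dotProduct_self_nonneg _) (mul_self_nonneg _)
  by_contra! h
  nlinarith [mul_nonpos_of_nonpos_of_nonneg h hV0.le]

lemma mdot_self_pos_of_mdot_eq_zero {V A : Fin (N+1) → ℝ} (hV : FDTimelike V)
    (horth : mdot V A = 0) (hA : A ≠ 0) : 0 < mdot A A := by
  obtain ⟨hVV, hV0⟩ := hV
  rw [mdot_eq_dotProduct_tail] at hVV horth ⊢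
  have hcs := dotProduct_sq_le (Fin.tail V) (Fin.tail A)
  rw [show Fin.tail V ⬝ᵥ Fin.tail A = V 0 * A 0 by linarith] at hcs
  by_contra! h
  have hA' : Fin.tail A ⬝ᵥ Fin.tail A ≤ A 0 * A 0 := by linarith
  have : (V 0 * V 0 - Fin.tail V ⬝ᵥ Fin.tail V) * (A 0 * A 0) ≤ 0 := by
    nlinarith [mul_le_mul_of_nonneg_left hA' (dotProduct_self_nonneg (Fin.tail V))]
  have hA0 : A 0 = 0 := mul_self_eq_zero.1 <|
    le_antisymm (nonpos_of_mul_nonpos_right this (by linarith)) (mul_self_nonneg _)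
  have htail : Fin.tail A = 0 :=
    dotProduct_self_eq_zero.1 (le_antisymm (by simpa [hA0] using hA') (dotProduct_self_nonneg _))
  exact hA (funext fun i => Fin.cases hA0 (congrFun htail) i)

lemma fdCausal_smul_add_smul {V A : Fin (N+1) → ℝ} (hV : FDTimelike V) (hVnorm : mdot V V = -1)
    (horth : mdot V A = 0) {a s : ℝ} (ha : 0 < a) (hs : s ^ 2 * mdot A A ≤ a ^ 2) :
    FDCausal (a • V + s • A) := by
  have hAV : mdot A V = 0 := by rw [mdot_comm, horth]
  have hww : mdot (a • V + s • A) (a • V + s • A) ≤ 0 := by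
    rw [mdot_eq_Tbil, Tbil_smul_add_smul]
    simp only [← mdot_eq_Tbil, hVnorm, horth, hAV]
    nlinarith
  have hwV : mdot (a • V + s • A) V < 0 := by
    rw [mdot_eq_Tbil, Tbil_smul_add_smul_left]
    simp only [← mdot_eq_Tbil, hVnorm, hAV]
    linarith
  exact fdCausal_iff.2 ⟨hww, apply_zero_pos_of_mdot_neg hV hww hwV⟩

lemma DEC.Tbil_nonneg {T : Matrix (Fin (N+1)) (Fin (N+1)) ℝ} (hdec : DEC T)
    {v w : Fin (N+1) → ℝ} (hv : FDCausal v) (hw : FDCausal w) : 0 ≤ Tbil T v w := by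
  have := mdot_endo T w v
  rcases hdec w hw with hcausal | hzero
  · linarith [mdot_nonpos_of_fdCausal hcausal hv]
  · rw [hzero, mdot, zero_dotProduct] at this
    linarith

end Minkowski

theorem dec_ineq_AA_general {N : ℕ}
    (T : Matrix (Fin (N+1)) (Fin (N+1)) ℝ)
    (hdec : DEC T)
    (V : Fin (N+1) → ℝ) (hV : FDTimelike V) (hVnorm : mdot V V = -1)
    (A : Fin (N+1) → ℝ) (horth : mdot V A = 0) :
    |Tbil T A A| ≤ Tbil T V V * mdot A A := by
  rcases eq_or_ne A 0 with rfl | hA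
  · simp [Tbil, mdot]
  have hAA := mdot_self_pos_of_mdot_eq_zero hV horth hA
  set a := √(mdot A A)
  have ha : 0 < a := Real.sqrt_pos.2 hAA
  have ha2 : a ^ 2 = mdot A A := Real.sq_sqrt hAA.le
  have hnull (s : ℝ) (hs : s ^ 2 = 1) : FDCausal (a • V + s • A) :=
    fdCausal_smul_add_smul hV hVnorm horth ha (by rw [hs, one_mul, ha2])
  have hplus := hnull 1 (by norm_num)
  have hminus := hnull (-1) (by norm_num)
  have h₁ := hdec.Tbil_nonneg hplus hplus
  have h₂ := hdec.Tbil_nonneg hminus hminus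
  have h₃ := hdec.Tbil_nonneg hplus hminus
  have h₄ := hdec.Tbil_nonneg hminus hplus
  simp only [Tbil_smul_add_smul] at h₁ h₂ h₃ h₄
  rw [← ha2, abs_le]
  constructor <;> linarith

/-- `|T(A,A)| ≤ T(V,V) ⬝ |A|²` for `V` unit timelike and `A` orthogonal
to `V`. -/
theorem dec_ineq_AA {N : ℕ} (hN : 1 ≤ N)
    (T : Matrix (Fin (N+1)) (Fin (N+1)) ℝ) (hsymm : T.IsSymm)
    (hdec : DEC T)
    (V : Fin (N+1) → ℝ) (hV : FDTimelike V) (hVnorm : mdot V V = -1)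
    (A : Fin (N+1) → ℝ) (horth : mdot V A = 0) :
    |Tbil T A A| ≤ Tbil T V V * mdot A A :=
  dec_ineq_AA_general T hdec V hV hVnorm A horth
end
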